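/- arXiv:1908.08487 — 2 statements merged into one kernel-verified Lean document; each statement's English description precedes it below -/
import Mathlib

section
/- Let f ≥ 0 be a measurable function on ℝ^d, let μ > 0, 0 < δ₁ < 1, and B ≥ 1. Suppose {S_j}_{j∈ℕ} is a countable family of measurable sets of finite positive Lebesgue measure such that (i) ∫_{S_j} f = μ(1−δ₁)|S_j| for every j, (ii) {x : f(x) ≥ μ} ⊆ ⋃_j S_j, and (iii) Σ_j 1_{S_j}(x) ≤ B for every x. Then |⋃_j S_j| ≥ |{f ≥ μ}| + |{f ≥ 2μ}|/B. -/
open MeasureTheory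
open scoped ENNReal

/-!
On each `S j`, `f ≥ μ 1_{f ≥ μ} + μ 1_{f ≥ 2μ}` and the average of `f` is at most `μ`, so
`|S j ∩ {f ≥ 2μ}| ≤ |S j \ {f ≥ μ}|`. Summing over `j`, the left sides cover `{f ≥ 2μ}`, while
the right sides overlap at most `B` times inside `(⋃ j, S j) \ {f ≥ μ}`; and `{f ≥ μ}` is the
rest of `⋃ j, S j`.
-/

namespace MeasureTheory

variable {α : Type*} [MeasurableSpace α] {ν : Measure α}

theorem tsum_measure_le_mul_measure_iUnion {s : ℕ → Set α} (hs : ∀ j, MeasurableSet (s j))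
    {M : ℝ≥0∞} (hM : ∀ x, ∑' j, (s j).indicator 1 x ≤ M) :
    ∑' j, ν (s j) ≤ M * ν (⋃ j, s j) := by
  calc ∑' j, ν (s j) = ∫⁻ x in ⋃ j, s j, ∑' j, (s j).indicator 1 x ∂ν := by
        rw [setLIntegral_eq_of_support_subset, lintegral_tsum
          fun j ↦ (measurable_one.indicator (hs j)).aemeasurable]
        · simp_rw [lintegral_indicator_one (hs _)]
        · intro x hx
          obtain ⟨j, hj⟩ : ∃ j, (s j).indicator (1 : α → ℝ≥0∞) x ≠ 0 := by
            by_contra! h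
            exact hx (ENNReal.tsum_eq_zero.mpr h)
          exact Set.mem_iUnion.mpr ⟨j, Set.mem_of_indicator_ne_zero hj⟩
    _ ≤ ∫⁻ _ in ⋃ j, s j, M ∂ν := lintegral_mono hM
    _ = M * ν (⋃ j, s j) := setLIntegral_const _ _

theorem measure_inter_le_measure_diff_of_setLIntegral_le {g : α → ℝ≥0∞} (hg : Measurable g)
    {c : ℝ≥0∞} (hc₀ : c ≠ 0) (hc : c ≠ ∞) {s : Set α} (hs : ν s ≠ ∞)
    (hint : ∫⁻ x in s, g x ∂ν ≤ c * ν s) :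
    ν (s ∩ {x | 2 * c ≤ g x}) ≤ ν (s \ {x | c ≤ g x}) := by
  set E₁ := {x | c ≤ g x}
  set E₂ := {x | 2 * c ≤ g x}
  have hE₁ : MeasurableSet E₁ := measurableSet_le measurable_const hg
  have hE₂ : MeasurableSet E₂ := measurableSet_le measurable_const hg
  have hlower : ∀ x, E₁.indicator (fun _ ↦ c) x + E₂.indicator (fun _ ↦ c) x ≤ g x := by
    intro x
    by_cases h₂ : x ∈ E₂
    · have h₁ : x ∈ E₁ := le_trans (two_mul c ▸ le_add_self) h₂
      rw [Set.indicator_of_mem h₁, Set.indicator_of_mem h₂, ← two_mul]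
      exact h₂
    · by_cases h₁ : x ∈ E₁ <;> simp_all [E₁]
  have key : c * ν (s ∩ E₁) + c * ν (s ∩ E₂) ≤ c * ν (s ∩ E₁) + c * ν (s \ E₁) :=
    calc c * ν (s ∩ E₁) + c * ν (s ∩ E₂)
        = ∫⁻ x in s, E₁.indicator (fun _ ↦ c) x + E₂.indicator (fun _ ↦ c) x ∂ν := by
          rw [lintegral_add_left (measurable_const.indicator hE₁), lintegral_indicator_const hE₁,
            lintegral_indicator_const hE₂, Measure.restrict_apply hE₁,
            Measure.restrict_apply hE₂, Set.inter_comm E₁, Set.inter_comm E₂]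
      _ ≤ ∫⁻ x in s, g x ∂ν := lintegral_mono hlower
      _ ≤ c * ν s := hint
      _ = c * ν (s ∩ E₁) + c * ν (s \ E₁) := by rw [← mul_add, measure_inter_add_sdiff s hE₁]
  have hfin : c * ν (s ∩ E₁) ≠ ∞ :=
    ENNReal.mul_ne_top hc (measure_ne_top_of_subset Set.inter_subset_left hs)
  exact (ENNReal.mul_le_mul_iff_right hc₀ hc).mp ((ENNReal.add_le_add_iff_left hfin).mp key)

theorem measure_inter_le_measure_diff_of_setIntegral_le {f : α → ℝ} (hf : Measurable f)
    (hf₀ : ∀ x, 0 ≤ f x) {c : ℝ} (hc : 0 < c) {s : Set α} (hs : ν s ≠ ∞)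
    (hfs : IntegrableOn f s ν) (hint : ∫ x in s, f x ∂ν ≤ c * (ν s).toReal) :
    ν (s ∩ {x | 2 * c ≤ f x}) ≤ ν (s \ {x | c ≤ f x}) := by
  have hlevel : ∀ a, {x | ENNReal.ofReal a ≤ ENNReal.ofReal (f x)} = {x | a ≤ f x} := fun a ↦
    Set.ext fun x ↦ ENNReal.ofReal_le_ofReal_iff (hf₀ x)
  have hlint : ∫⁻ x in s, ENNReal.ofReal (f x) ∂ν ≤ ENNReal.ofReal c * ν s := by
    rw [← ofReal_integral_eq_lintegral_ofReal hfs (ae_of_all _ hf₀), ← ENNReal.ofReal_toReal hs,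
      ← ENNReal.ofReal_mul hc.le]
    exact ENNReal.ofReal_le_ofReal hint
  have h := measure_inter_le_measure_diff_of_setLIntegral_le hf.ennreal_ofReal
    (ENNReal.ofReal_pos.2 hc).ne' ENNReal.ofReal_ne_top hs hlint
  rwa [← ENNReal.ofReal_ofNat 2, ← ENNReal.ofReal_mul zero_le_two, hlevel, hlevel] at h

end MeasureTheory

theorem covering_measure_estimate_general
    (d : ℕ)
    (f : EuclideanSpace ℝ (Fin d) → ℝ) (hfmeas : Measurable f) (hf0 : ∀ x, 0 ≤ f x)
    (μ : ℝ) (hμ : 0 < μ)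
    (δ₁ : ℝ) (hδ₁ : 0 < δ₁) (hδ₁' : δ₁ < 1)
    (B : ℝ)
    (S : ℕ → Set (EuclideanSpace ℝ (Fin d)))
    (hSmeas : ∀ j, MeasurableSet (S j))
    (hSpos : ∀ j, 0 < volume (S j))
    (hSfin : ∀ j, volume (S j) < ∞)
    (havg : ∀ j, (∫ x in S j, f x) = μ * (1 - δ₁) * (volume (S j)).toReal)
    (hcover : {x | μ ≤ f x} ⊆ ⋃ j, S j)
    (hbound : ∀ x, (∑' j, Set.indicator (S j) (fun _ => (1 : ℝ≥0∞)) x) ≤ ENNReal.ofReal B) :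
    volume {x | μ ≤ f x} + volume {x | 2 * μ ≤ f x} / ENNReal.ofReal B ≤
      volume (⋃ j, S j) := by
  set E₁ := {x | μ ≤ f x}
  set E₂ := {x | 2 * μ ≤ f x}
  have hE₁ : MeasurableSet E₁ := measurableSet_le measurable_const hfmeas
  have hE₂₁ : E₂ ⊆ E₁ := fun x (hx : 2 * μ ≤ f x) ↦ show μ ≤ f x by linarith
  have hlocal : ∀ j, volume (S j ∩ E₂) ≤ volume (S j \ E₁) := fun j ↦ by
    have hvol : 0 < (volume (S j)).toReal := ENNReal.toReal_pos (hSpos j).ne' (hSfin j).ne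
    refine measure_inter_le_measure_diff_of_setIntegral_le hfmeas hf0 hμ (hSfin j).ne ?_ ?_
    · refine Integrable.of_integral_ne_zero ?_
      rw [havg j]
      exact (mul_pos (mul_pos hμ (sub_pos.2 hδ₁')) hvol).ne'
    · rw [havg j]
      gcongr
      exact mul_le_of_le_one_right hμ.le (by linarith)
  have hcovered : volume E₂ ≤ ∑' j, volume (S j ∩ E₂) := by
    refine (measure_mono ?_).trans (measure_iUnion_le _)
    rw [← Set.iUnion_inter]
    exact Set.subset_inter (hE₂₁.trans hcover) le_rfl
  have hoverlap : ∑' j, volume (S j \ E₁) ≤ ENNReal.ofReal B * volume ((⋃ j, S j) \ E₁) := by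
    rw [Set.iUnion_sdiff]
    refine tsum_measure_le_mul_measure_iUnion (fun j ↦ (hSmeas j).diff hE₁) fun x ↦ ?_
    refine (ENNReal.tsum_le_tsum fun j ↦ ?_).trans (hbound x)
    exact Set.indicator_le_indicator_of_subset Set.sdiff_subset (fun _ ↦ zero_le) x
  calc volume E₁ + volume E₂ / ENNReal.ofReal B
      ≤ volume ((⋃ j, S j) ∩ E₁) + volume ((⋃ j, S j) \ E₁) := by
        rw [Set.inter_eq_right.2 hcover]
        gcongr
        exact ENNReal.div_le_of_le_mul'
          (hcovered.trans ((ENNReal.tsum_le_tsum hlocal).trans hoverlap))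
    _ = volume (⋃ j, S j) := measure_inter_add_sdiff _ hE₁

theorem covering_measure_estimate
    (d : ℕ)
    (f : EuclideanSpace ℝ (Fin d) → ℝ) (hfmeas : Measurable f) (hf0 : ∀ x, 0 ≤ f x)
    (μ : ℝ) (hμ : 0 < μ)
    (δ₁ : ℝ) (hδ₁ : 0 < δ₁) (hδ₁' : δ₁ < 1)
    (B : ℝ) (hB : 1 ≤ B)
    (S : ℕ → Set (EuclideanSpace ℝ (Fin d)))
    (hSmeas : ∀ j, MeasurableSet (S j))
    (hSpos : ∀ j, 0 < volume (S j))
    (hSfin : ∀ j, volume (S j) < ∞)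
    (havg : ∀ j, (∫ x in S j, f x) = μ * (1 - δ₁) * (volume (S j)).toReal)
    (hcover : {x | μ ≤ f x} ⊆ ⋃ j, S j)
    (hbound : ∀ x, (∑' j, Set.indicator (S j) (fun _ => (1 : ℝ≥0∞)) x) ≤ ENNReal.ofReal B) :
    volume {x | μ ≤ f x} + volume {x | 2 * μ ≤ f x} / ENNReal.ofReal B ≤
      volume (⋃ j, S j) :=
  covering_measure_estimate_general d f hfmeas hf0 μ hμ δ₁ hδ₁ hδ₁' B S hSmeas hSpos hSfin havg
    hcover hbound
end

section
/- Let K ⊂ ℝ^d be a centrally symmetric convex body. The sequence M^n 1_{B(0,1)} is pointwise nondecreasing in n and bounded by 1, and its pointwise limit g = lim_{n→∞} M^n 1_{B(0,1)} satisfies Mg(x) = g(x) for every x ∈ ℝ^d; i.e. the limit is a fixed point of M. -/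
open MeasureTheory Metric Filter

/-- The centered maximal function on `ℝ^d` associated to a centrally symmetric
convex body `K`. -/
noncomputable def centeredMax {d : ℕ} (K : Set (EuclideanSpace ℝ (Fin d)))
    (f : EuclideanSpace ℝ (Fin d) → ℝ) (x : EuclideanSpace ℝ (Fin d)) : ℝ :=
  ⨆ l : {l : ℝ // 0 < l}, ⨍ y in (fun z => x + (l : ℝ) • z) '' K, |f y|

/-!
Since `K` is a convex body containing a ball around `0`, `M` maps measurable functions with
values in `[0, 1]` to lower semicontinuous, hence measurable, functions with values in `[0, 1]`,
and it is monotone in `|f|`. As the unit ball `B` is open, `1_B ≤ M 1_B`, and monotonicity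
propagates this to `M^n 1_B ≤ M^(n+1) 1_B`. For the limit `g`, monotonicity gives `g ≤ M g`;
conversely every average of `g` over a dilate of `K` is, by dominated convergence, the limit of the
averages of `M^n 1_B`, each at most `M^(n+1) 1_B ≤ g`, so `M g ≤ g`.
-/

open Topology Module

section Dilates

variable {E : Type*} [NormedAddCommGroup E] [NormedSpace ℝ E] {K : Set E}

lemma Convex.exists_ball_subset_of_eq_neg (hconv : Convex ℝ K) (hint : (interior K).Nonempty)
    (hsymm : K = -K) : ∃ r > 0, ball (0 : E) r ⊆ K := by
  obtain ⟨z, hz⟩ := hint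
  obtain ⟨r, hr, hball⟩ := Metric.isOpen_iff.1 isOpen_interior z hz
  refine ⟨r, hr, fun w hw => ?_⟩
  rw [mem_ball_zero_iff] at hw
  have hplus : z + w ∈ K := interior_subset <| hball <| by simpa [dist_eq_norm] using hw
  have hminus : z - w ∈ K := interior_subset <| hball <| by simpa [dist_eq_norm] using hw
  have hneg : -z + w ∈ K := by
    rw [hsymm, Set.mem_neg]
    convert hminus using 1
    abel
  convert hconv hplus hneg (by norm_num : (0 : ℝ) ≤ 1 / 2) (by norm_num : (0 : ℝ) ≤ 1 / 2)
    (by norm_num) using 1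
  module

lemma image_dilate_subset_ball {R : ℝ} (hK : K ⊆ ball 0 R) (x : E) {l : ℝ} (hl : 0 < l) :
    (fun z => x + l • z) '' K ⊆ ball x (l * R) := by
  rintro _ ⟨k, hk, rfl⟩
  replace hk := mem_ball_zero_iff.1 (hK hk)
  rw [mem_ball, dist_eq_norm, add_sub_cancel_left, norm_smul, Real.norm_of_nonneg hl.le]
  exact mul_lt_mul_of_pos_left hk hl

-- The ball of radius `(l' - l) r` inside `(l' - l) K` absorbs the shift of the center.
lemma Convex.image_dilate_subset_image_dilate (hconv : Convex ℝ K) {r : ℝ}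
    (hball : ball (0 : E) r ⊆ K) {x x' : E} {l l' : ℝ} (hl : 0 < l) (hll' : l < l')
    (hx : ‖x - x'‖ < (l' - l) * r) :
    (fun z => x + l • z) '' K ⊆ (fun z => x' + l' • z) '' K := by
  rintro _ ⟨k, hk, rfl⟩
  have hδ : 0 < l' - l := sub_pos.2 hll'
  have hl' : 0 < l' := hl.trans hll'
  have hw : (l' - l)⁻¹ • (x - x') ∈ K := by
    apply hball
    rwa [mem_ball_zero_iff, norm_smul, Real.norm_of_nonneg (inv_nonneg.2 hδ.le),
      inv_mul_lt_iff₀ hδ]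
  refine ⟨(l / l') • k + ((l' - l) / l') • (l' - l)⁻¹ • (x - x'),
    hconv hk hw (by positivity) (by positivity) (by field_simp; ring), ?_⟩
  simp only [smul_add, smul_smul]
  rw [show l' * (l / l') = l by field_simp,
    show l' * ((l' - l) / l' * (l' - l)⁻¹) = 1 by field_simp]
  module

variable [MeasurableSpace E] [BorelSpace E] [FiniteDimensional ℝ E] (μ : Measure E)
  [μ.IsAddHaarMeasure]

open Pointwise in
lemma addHaar_image_dilate (x : E) {l : ℝ} (hl : 0 ≤ l) :
    μ ((fun z => x + l • z) '' K) = ENNReal.ofReal (l ^ finrank ℝ E) * μ K := by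
  have : (fun z => x + l • z) '' K = x +ᵥ l • K := by
    rw [← Set.image_vadd, ← Set.image_smul, Set.image_image]
    rfl
  rw [this, measure_vadd, Measure.addHaar_smul_of_nonneg μ hl]

lemma addHaar_real_image_dilate (x : E) {l : ℝ} (hl : 0 ≤ l) :
    μ.real ((fun z => x + l • z) '' K) = l ^ finrank ℝ E * μ.real K := by
  rw [measureReal_def, addHaar_image_dilate μ x hl, ENNReal.toReal_mul,
    ENNReal.toReal_ofReal (by positivity), measureReal_def]

lemma addHaar_image_dilate_ne_zero (hK : μ K ≠ 0) (x : E) {l : ℝ} (hl : 0 < l) :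
    μ ((fun z => x + l • z) '' K) ≠ 0 := by
  rw [addHaar_image_dilate μ x hl.le]
  exact mul_ne_zero (by simpa using pow_pos hl _) hK

lemma addHaar_image_dilate_ne_top (hK : μ K ≠ ⊤) (x : E) {l : ℝ} (hl : 0 ≤ l) :
    μ ((fun z => x + l • z) '' K) ≠ ⊤ := by
  rw [addHaar_image_dilate μ x hl]
  exact ENNReal.mul_ne_top ENNReal.ofReal_ne_top hK

end Dilates

section SetAverage

variable {α : Type*} [MeasurableSpace α] {μ : Measure α} {s t : Set α} {f g : α → ℝ}

lemma setAverage_nonneg (hf : ∀ y, 0 ≤ f y) : 0 ≤ ⨍ y in s, f y ∂μ := by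
  rw [setAverage_eq]
  exact smul_nonneg (by positivity) (integral_nonneg hf)

lemma setAverage_le_of_le (hs₀ : μ s ≠ 0) (hs : μ s ≠ ⊤) {c : ℝ} (hf₀ : ∀ y, 0 ≤ f y)
    (hfc : ∀ y, f y ≤ c) : ⨍ y in s, f y ∂μ ≤ c := by
  calc ⨍ y in s, f y ∂μ ≤ ⨍ _ in s, c ∂μ := by
        rw [setAverage_eq, setAverage_eq]
        exact smul_le_smul_of_nonneg_left (integral_mono_of_nonneg (.of_forall hf₀)
          (integrableOn_const hs) (.of_forall hfc)) (by positivity)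
    _ = c := setAverage_const hs₀ hs c

lemma setAverage_mono (hf₀ : ∀ y, 0 ≤ f y) (hfg : ∀ y, f y ≤ g y) (hg : IntegrableOn g s μ) :
    ⨍ y in s, f y ∂μ ≤ ⨍ y in s, g y ∂μ := by
  rw [setAverage_eq, setAverage_eq]
  exact smul_le_smul_of_nonneg_left
    (integral_mono_of_nonneg (.of_forall hf₀) hg (.of_forall hfg)) (by positivity)

lemma div_mul_setAverage_le_of_subset (hf : ∀ y, 0 ≤ f y) (hst : s ⊆ t)
    (hft : IntegrableOn f t μ) :
    μ.real s / μ.real t * ⨍ y in s, f y ∂μ ≤ ⨍ y in t, f y ∂μ := by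
  rcases eq_or_ne (μ.real s) 0 with hs | hs
  · rw [hs, zero_div, zero_mul]
    exact setAverage_nonneg hf
  rw [setAverage_eq, setAverage_eq, smul_eq_mul, smul_eq_mul, div_mul_eq_mul_div,
    mul_inv_cancel_left₀ hs, div_eq_inv_mul]
  exact mul_le_mul_of_nonneg_left (setIntegral_mono_set hft (.of_forall hf) hst.eventuallyLE)
    (by positivity)

lemma tendsto_setAverage_of_tendsto (hs : μ s ≠ ⊤) {F : ℕ → α → ℝ}
    (hF : ∀ n, AEStronglyMeasurable (F n) μ) {C : ℝ} (hFC : ∀ n y, |F n y| ≤ C)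
    (hlim : ∀ y, Tendsto (fun n => F n y) atTop (𝓝 (g y))) :
    Tendsto (fun n => ⨍ y in s, F n y ∂μ) atTop (𝓝 (⨍ y in s, g y ∂μ)) := by
  simp only [setAverage_eq]
  exact (tendsto_integral_of_dominated_convergence (fun _ => C) (fun n => (hF n).restrict)
    (integrableOn_const hs) (fun n => .of_forall (hFC n)) (.of_forall hlim)).const_smul _

end SetAverage

section CenteredMax

variable {d : ℕ} {K : Set (EuclideanSpace ℝ (Fin d))}

local notation "E" => EuclideanSpace ℝ (Fin d)

lemma centeredMax_nonneg (K : Set E) (f : E → ℝ) (x : E) : 0 ≤ centeredMax K f x :=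
  Real.iSup_nonneg fun _ => setAverage_nonneg fun _ => abs_nonneg _

lemma setAverage_abs_image_dilate_le_one (hK₀ : volume K ≠ 0) (hK : volume K ≠ ⊤) {f : E → ℝ}
    (hf : ∀ y, |f y| ≤ 1) (x : E) {l : ℝ} (hl : 0 < l) :
    ⨍ y in (fun z => x + l • z) '' K, |f y| ≤ 1 :=
  setAverage_le_of_le (addHaar_image_dilate_ne_zero volume hK₀ x hl)
    (addHaar_image_dilate_ne_top volume hK x hl.le) (fun _ => abs_nonneg _) hf

lemma integrableOn_abs_image_dilate (hK : volume K ≠ ⊤) {f : E → ℝ}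
    (hfm : AEStronglyMeasurable f volume) (hf : ∀ y, |f y| ≤ 1) (x : E) {l : ℝ} (hl : 0 ≤ l) :
    IntegrableOn (fun y => |f y|) ((fun z => x + l • z) '' K) volume :=
  (Measure.integrableOn_of_bounded (addHaar_image_dilate_ne_top volume hK x hl) hfm
    (.of_forall fun y => (Real.norm_eq_abs _).trans_le (hf y))).abs

lemma centeredMax_le_one (hK₀ : volume K ≠ 0) (hK : volume K ≠ ⊤) {f : E → ℝ}
    (hf : ∀ y, |f y| ≤ 1) (x : E) : centeredMax K f x ≤ 1 :=
  Real.iSup_le (fun l => setAverage_abs_image_dilate_le_one hK₀ hK hf x l.2) zero_le_one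

lemma setAverage_le_centeredMax (hK₀ : volume K ≠ 0) (hK : volume K ≠ ⊤) {f : E → ℝ}
    (hf : ∀ y, |f y| ≤ 1) (x : E) {l : ℝ} (hl : 0 < l) :
    ⨍ y in (fun z => x + l • z) '' K, |f y| ≤ centeredMax K f x := by
  refine le_ciSup (f := fun l : {l : ℝ // 0 < l} => ⨍ y in (fun z => x + (l : ℝ) • z) '' K, |f y|)
    ⟨1, ?_⟩ ⟨l, hl⟩
  rintro _ ⟨l, rfl⟩
  exact setAverage_abs_image_dilate_le_one hK₀ hK hf x l.2

lemma centeredMax_mono (hK₀ : volume K ≠ 0) (hK : volume K ≠ ⊤) {f h : E → ℝ}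
    (hfh : ∀ y, |f y| ≤ |h y|) (hhm : AEStronglyMeasurable h volume) (hh : ∀ y, |h y| ≤ 1)
    (x : E) : centeredMax K f x ≤ centeredMax K h x :=
  Real.iSup_le (fun l => (setAverage_mono (fun _ => abs_nonneg _) hfh
      (integrableOn_abs_image_dilate hK hhm hh x l.2.le)).trans
    (setAverage_le_centeredMax hK₀ hK hh x l.2)) (centeredMax_nonneg K h x)

-- Enlarging the dilation factor from `l` to `l'` costs at most the factor `(l / l') ^ d`, and
-- the enlarged dilate still contains `x + l • K` when its center `x'` is close to `x`.
lemma lowerSemicontinuous_centeredMax (hK₀ : volume K ≠ 0) (hK : volume K ≠ ⊤)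
    (hconv : Convex ℝ K) {r : ℝ} (hr : 0 < r) (hball : ball 0 r ⊆ K) {f : E → ℝ}
    (hfm : AEStronglyMeasurable f volume) (hf : ∀ y, |f y| ≤ 1) :
    LowerSemicontinuous (centeredMax K f) := by
  intro x t ht
  obtain ⟨⟨l, hl⟩, hlt⟩ := exists_lt_of_lt_ciSup ht
  set A := ⨍ y in (fun z => x + l • z) '' K, |f y|
  have hcont : Tendsto (fun l' : ℝ => (l / l') ^ d * A) (𝓝[>] l) (𝓝 A) := by
    have := (((tendsto_const_nhds (x := l)).div tendsto_id hl.ne').pow d).mul_const A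
    rw [div_self hl.ne', one_pow, one_mul] at this
    exact this.mono_left nhdsWithin_le_nhds
  obtain ⟨l', hl't, hll'⟩ :=
    ((hcont.eventually (lt_mem_nhds hlt)).and (self_mem_nhdsWithin (s := Set.Ioi l))).exists
  have hl' : 0 < l' := hl.trans hll'
  filter_upwards [ball_mem_nhds x (mul_pos (sub_pos.2 hll') hr)] with x' hx'
  have hsub : (fun z => x + l • z) '' K ⊆ (fun z => x' + l' • z) '' K :=
    hconv.image_dilate_subset_image_dilate hball hl hll' (by rwa [← dist_eq_norm, dist_comm])
  have hK₀' : volume.real K ≠ 0 := (ENNReal.toReal_pos hK₀ hK).ne'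
  calc t < (l / l') ^ d * A := hl't
    _ = volume.real ((fun z => x + l • z) '' K) / volume.real ((fun z => x' + l' • z) '' K)
          * A := by
        rw [addHaar_real_image_dilate volume x hl.le, addHaar_real_image_dilate volume x' hl'.le,
          finrank_euclideanSpace_fin, mul_div_mul_right _ _ hK₀', div_pow]
    _ ≤ ⨍ y in (fun z => x' + l' • z) '' K, |f y| :=
        div_mul_setAverage_le_of_subset (fun _ => abs_nonneg _) hsub
          (integrableOn_abs_image_dilate hK hfm hf x' hl'.le)
    _ ≤ centeredMax K f x' := setAverage_le_centeredMax hK₀ hK hf x' hl'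

lemma centeredMax_le_of_tendsto (hK₀ : volume K ≠ 0) (hK : volume K ≠ ⊤) {F : ℕ → E → ℝ}
    {g : E → ℝ} (hFm : ∀ n, AEStronglyMeasurable (F n) volume) (hF : ∀ n y, |F n y| ≤ 1)
    (hlim : ∀ y, Tendsto (fun n => F n y) atTop (𝓝 (g y))) (x : E) {c : ℝ} (hc : 0 ≤ c)
    (hFc : ∀ n, centeredMax K (F n) x ≤ c) : centeredMax K g x ≤ c := by
  refine Real.iSup_le (fun l => le_of_tendsto'
    (tendsto_setAverage_of_tendsto (addHaar_image_dilate_ne_top volume hK x l.2.le)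
      (fun n => (hFm n).norm) (fun n y => by simpa using hF n y) (fun y => (hlim y).abs))
    fun n => (setAverage_le_centeredMax hK₀ hK (hF n) x l.2).trans (hFc n)) hc

end CenteredMax

section Iterates

def MeasurableUnitValued {X : Type*} [MeasurableSpace X] (f : X → ℝ) : Prop :=
  Measurable f ∧ ∀ y, f y ∈ Set.Icc (0 : ℝ) 1

lemma MeasurableUnitValued.abs_le_one {X : Type*} [MeasurableSpace X] {f : X → ℝ}
    (hf : MeasurableUnitValued f) (y : X) : |f y| ≤ 1 :=
  abs_le.2 ⟨(neg_nonpos.2 zero_le_one).trans (hf.2 y).1, (hf.2 y).2⟩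

lemma measurableUnitValued_indicator_one {X : Type*} [MeasurableSpace X] {U : Set X}
    (hU : MeasurableSet U) : MeasurableUnitValued (U.indicator fun _ => (1 : ℝ)) :=
  ⟨measurable_const.indicator hU, fun y => by
    by_cases hy : y ∈ U <;> simp [hy]⟩

lemma bddAbove_range_of_measurableUnitValued {X ι : Type*} [MeasurableSpace X] {F : ι → X → ℝ}
    (hF : ∀ n, MeasurableUnitValued (F n)) (x : X) : BddAbove (Set.range fun n => F n x) :=
  ⟨1, by rintro _ ⟨n, rfl⟩; exact ((hF n).2 x).2⟩

variable {d : ℕ} {K : Set (EuclideanSpace ℝ (Fin d))}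

local notation "E" => EuclideanSpace ℝ (Fin d)

lemma measurableUnitValued_centeredMax (hK₀ : volume K ≠ 0) (hK : volume K ≠ ⊤)
    (hconv : Convex ℝ K) {r : ℝ} (hr : 0 < r) (hball : ball 0 r ⊆ K) {f : E → ℝ}
    (hf : MeasurableUnitValued f) : MeasurableUnitValued (centeredMax K f) :=
  ⟨(lowerSemicontinuous_centeredMax hK₀ hK hconv hr hball hf.1.aestronglyMeasurable
      hf.abs_le_one).measurable,
    fun x => ⟨centeredMax_nonneg K f x, centeredMax_le_one hK₀ hK hf.abs_le_one x⟩⟩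

lemma measurableUnitValued_iterate_centeredMax (hK₀ : volume K ≠ 0) (hK : volume K ≠ ⊤)
    (hconv : Convex ℝ K) {r : ℝ} (hr : 0 < r) (hball : ball 0 r ⊆ K) {f : E → ℝ}
    (hf : MeasurableUnitValued f) (n : ℕ) : MeasurableUnitValued ((centeredMax K)^[n] f) := by
  induction n with
  | zero => exact hf
  | succ n ih =>
    rw [Function.iterate_succ_apply']
    exact measurableUnitValued_centeredMax hK₀ hK hconv hr hball ih

lemma monotone_iterate_centeredMax (hK₀ : volume K ≠ 0) (hK : volume K ≠ ⊤)
    (hconv : Convex ℝ K) {r : ℝ} (hr : 0 < r) (hball : ball 0 r ⊆ K) {f : E → ℝ}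
    (hf : MeasurableUnitValued f) (hfM : ∀ x, f x ≤ centeredMax K f x) (x : E) :
    Monotone fun n => (centeredMax K)^[n] f x := by
  have hF := measurableUnitValued_iterate_centeredMax hK₀ hK hconv hr hball hf
  suffices h : ∀ n x, (centeredMax K)^[n] f x ≤ (centeredMax K)^[n + 1] f x from
    monotone_nat_of_le_succ fun n => h n x
  intro n
  induction n with
  | zero => exact hfM
  | succ n ih =>
    intro x
    rw [Function.iterate_succ_apply', Function.iterate_succ_apply' _ (n + 1)]
    exact centeredMax_mono hK₀ hK (fun y => abs_le_abs_of_nonneg ((hF n).2 y).1 (ih y))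
      (hF (n + 1)).1.aestronglyMeasurable (hF (n + 1)).abs_le_one x

lemma tendsto_iterate_centeredMax (hK₀ : volume K ≠ 0) (hK : volume K ≠ ⊤)
    (hconv : Convex ℝ K) {r : ℝ} (hr : 0 < r) (hball : ball 0 r ⊆ K) {f : E → ℝ}
    (hf : MeasurableUnitValued f) (hfM : ∀ x, f x ≤ centeredMax K f x) (x : E) :
    Tendsto (fun n => (centeredMax K)^[n] f x) atTop (𝓝 (⨆ n, (centeredMax K)^[n] f x)) :=
  tendsto_atTop_ciSup (monotone_iterate_centeredMax hK₀ hK hconv hr hball hf hfM x)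
    (bddAbove_range_of_measurableUnitValued
      (measurableUnitValued_iterate_centeredMax hK₀ hK hconv hr hball hf) x)

lemma centeredMax_iSup_iterate (hK₀ : volume K ≠ 0) (hK : volume K ≠ ⊤)
    (hconv : Convex ℝ K) {r : ℝ} (hr : 0 < r) (hball : ball 0 r ⊆ K) {f : E → ℝ}
    (hf : MeasurableUnitValued f) (hfM : ∀ x, f x ≤ centeredMax K f x) (x : E) :
    centeredMax K (fun y => ⨆ n, (centeredMax K)^[n] f y) x =
      ⨆ n, (centeredMax K)^[n] f x := by
  set F := fun n => (centeredMax K)^[n] f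
  set g := fun y => ⨆ n, F n y
  have hF := measurableUnitValued_iterate_centeredMax hK₀ hK hconv hr hball hf
  have hlim := tendsto_iterate_centeredMax hK₀ hK hconv hr hball hf hfM
  have hFg : ∀ n y, F n y ≤ g y := fun n y =>
    le_ciSup (bddAbove_range_of_measurableUnitValued hF y) n
  have hg : MeasurableUnitValued g :=
    ⟨measurable_of_tendsto_metrizable' atTop (fun n => (hF n).1) (tendsto_pi_nhds.2 hlim),
      fun y => isClosed_Icc.mem_of_tendsto (hlim y) (.of_forall fun n => (hF n).2 y)⟩
  have hstep : ∀ n, centeredMax K (F n) = F (n + 1) := fun n =>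
    (Function.iterate_succ_apply' _ n f).symm
  apply le_antisymm
  · refine centeredMax_le_of_tendsto hK₀ hK (fun n => (hF n).1.aestronglyMeasurable)
      (fun n => (hF n).abs_le_one) hlim x (hg.2 x).1 fun n => ?_
    rw [hstep]
    exact hFg (n + 1) x
  · refine le_of_tendsto' ((tendsto_add_atTop_iff_nat 1).2 (hlim x)) fun n => ?_
    calc F (n + 1) x = centeredMax K (F n) x := (congrFun (hstep n) x).symm
      _ ≤ centeredMax K g x := centeredMax_mono hK₀ hK
        (fun y => abs_le_abs_of_nonneg ((hF n).2 y).1 (hFg n y)) hg.1.aestronglyMeasurable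
        hg.abs_le_one x

-- Around a point of an open set `U`, small enough dilates of `K` lie inside `U`.
lemma indicator_le_centeredMax_indicator (hK₀ : volume K ≠ 0) (hKc : IsCompact K) {U : Set E}
    (hU : IsOpen U) (x : E) :
    U.indicator (fun _ => (1 : ℝ)) x ≤ centeredMax K (U.indicator fun _ => (1 : ℝ)) x := by
  by_cases hx : x ∈ U
  · have hK : volume K ≠ ⊤ := hKc.measure_lt_top.ne
    obtain ⟨ε, hε, hεU⟩ := Metric.isOpen_iff.1 hU x hx
    obtain ⟨R, hR, hKR⟩ := hKc.isBounded.subset_ball_lt 0 0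
    have hl : 0 < ε / R := div_pos hε hR
    have hsub : (fun z => x + (ε / R) • z) '' K ⊆ U :=
      (image_dilate_subset_ball hKR x hl).trans (by rwa [div_mul_cancel₀ _ hR.ne'])
    have hmeas : MeasurableSet ((fun z => x + (ε / R) • z) '' K) :=
      (hKc.image (by fun_prop)).measurableSet
    calc U.indicator (fun _ => (1 : ℝ)) x = 1 := Set.indicator_of_mem hx _
      _ = ⨍ y in (fun z => x + (ε / R) • z) '' K, |U.indicator (fun _ => (1 : ℝ)) y| := by
        rw [setAverage_congr_fun (g := fun _ => (1 : ℝ)) hmeas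
          (.of_forall fun y hy => by simp [hsub hy]),
          setAverage_const (addHaar_image_dilate_ne_zero volume hK₀ x hl)
            (addHaar_image_dilate_ne_top volume hK x hl.le)]
      _ ≤ _ := setAverage_le_centeredMax hK₀ hK
        (measurableUnitValued_indicator_one hU.measurableSet).abs_le_one x hl
  · rw [Set.indicator_of_notMem hx]
    exact centeredMax_nonneg K _ x

end Iterates

theorem limit_of_iterates_is_fixed_point
    (d : ℕ)
    (K : Set (EuclideanSpace ℝ (Fin d))) (hKcomp : IsCompact K) (hKconv : Convex ℝ K)
    (hKint : (interior K).Nonempty) (hKsymm : K = -K)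
    (F : ℕ → EuclideanSpace ℝ (Fin d) → ℝ)
    (hF : F = fun n => (centeredMax K)^[n]
      (Set.indicator (ball (0 : EuclideanSpace ℝ (Fin d)) 1) fun _ => (1 : ℝ)))
    (g : EuclideanSpace ℝ (Fin d) → ℝ)
    (hg : g = fun x => ⨆ n : ℕ, F n x) :
    (∀ x, Monotone fun n => F n x) ∧
    (∀ n x, F n x ≤ 1) ∧
    (∀ x, Tendsto (fun n => F n x) atTop (nhds (g x))) ∧
    (∀ x, centeredMax K g x = g x) := by
  subst hF hg
  obtain ⟨r, hr, hball⟩ := hKconv.exists_ball_subset_of_eq_neg hKint hKsymm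
  have hK₀ : volume K ≠ 0 := (Measure.measure_pos_of_nonempty_interior volume hKint).ne'
  have hK : volume K ≠ ⊤ := hKcomp.measure_lt_top.ne
  have hU : IsOpen (ball (0 : EuclideanSpace ℝ (Fin d)) 1) := isOpen_ball
  have h₁ := measurableUnitValued_indicator_one hU.measurableSet
  have h₁M := indicator_le_centeredMax_indicator hK₀ hKcomp hU
  exact ⟨monotone_iterate_centeredMax hK₀ hK hKconv hr hball h₁ h₁M,
    fun n x => ((measurableUnitValued_iterate_centeredMax hK₀ hK hKconv hr hball h₁ n).2 x).2,
    tendsto_iterate_centeredMax hK₀ hK hKconv hr hball h₁ h₁M,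
    centeredMax_iSup_iterate hK₀ hK hKconv hr hball h₁ h₁M⟩
end
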